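/- arXiv:1806.06317 — 2 statements merged into one kernel-verified Lean document; each statement's English description precedes it below -/
import Mathlib

section
/- Let f : ℝ^m → ℝ be differentiable with L-Lipschitz continuous gradient and bounded below. Let σ ≥ 0, n ≥ 1, and let step sizes satisfy 0 < η̃ ≤ η_k ≤ η̄ < 2/L for all k. Then the iterates w^{k+1} = w^k − η_k (A_σ^{(n)})^{-1} ∇f(w^k) satisfy ‖∇f(w^k)‖ → 0 as k → ∞. -/
open Matrix

/-- The `m × m` periodic forward finite difference matrix `D₊`. -/
noncomputable def Dplus (m : ℕ) [NeZero m] : Matrix (Fin m) (Fin m) ℝ :=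
  Matrix.of fun i j => if j = i then -1 else if j = i + 1 then 1 else 0

/-- The periodic backward finite difference matrix `D₋ = -D₊ᵀ`. -/
noncomputable def Dminus (m : ℕ) [NeZero m] : Matrix (Fin m) (Fin m) ℝ := -(Dplus m)ᵀ

/-- The periodic one-dimensional discrete Laplacian `L = D₋ D₊`. -/
noncomputable def Lap (m : ℕ) [NeZero m] : Matrix (Fin m) (Fin m) ℝ := Dminus m * Dplus m

/-- The Laplacian smoothing matrix `A_σ = I - σ L`. -/
noncomputable def MatA (m : ℕ) [NeZero m] (σ : ℝ) : Matrix (Fin m) (Fin m) ℝ :=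
  1 - σ • Lap m

/-- The `n`-th order smoothing matrix `A_σ⁽ⁿ⁾ = I + (-1)ⁿ σ Lⁿ`. -/
noncomputable def MatAn (m : ℕ) [NeZero m] (σ : ℝ) (n : ℕ) : Matrix (Fin m) (Fin m) ℝ :=
  1 + ((-1 : ℝ) ^ n * σ) • Lap m ^ n

/-! Since `L = -D₊ᵀD₊`, the smoothing matrix is `A = I + σ (D₊ᵀD₊)ⁿ ≥ I`. Hence the search
direction `p = A⁻¹∇f(w)` satisfies `‖p‖² ≤ ⟪∇f(w), p⟫` and `‖∇f(w)‖ ≤ ‖A‖ ‖p‖`. The descent lemma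
then gives `f(w⁺) + η̃ (1 - L η̄ / 2) ‖p‖² ≤ f(w)`; as `f` is bounded below, these decreases tend
to `0`, so `p → 0` and therefore `∇f(w) → 0`. -/

open Set Filter Topology
open scoped InnerProductSpace

section PreconditionedDescent

variable {E : Type*} [NormedAddCommGroup E] [InnerProductSpace ℝ E] [CompleteSpace E]
  {f : E → ℝ} {g : E → E} {L : ℝ}

/-- The descent lemma. `t ↦ f (x + t • d) - t ⟪g x, d⟫ - L t² ‖d‖² / 2` has nonpositive derivative
on `[0, ∞)` by the Lipschitz bound on `g`, so its value at `1` is at most its value at `0`. -/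
theorem image_add_le_of_lipschitz_gradient (hg : ∀ x, HasGradientAt f (g x) x)
    (hlip : ∀ x y, ‖g x - g y‖ ≤ L * ‖x - y‖) (x d : E) :
    f (x + d) ≤ f x + ⟪g x, d⟫_ℝ + L / 2 * ‖d‖ ^ 2 := by
  set φ : ℝ → ℝ := fun t => f (x + t • d) - t * ⟪g x, d⟫_ℝ - L / 2 * t ^ 2 * ‖d‖ ^ 2
  have hφ : ∀ t, HasDerivAt φ (⟪g (x + t • d) - g x, d⟫_ℝ - L * t * ‖d‖ ^ 2) t := by
    intro t
    have hline : HasDerivAt (fun s : ℝ => x + s • d) d t := by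
      simpa using ((hasDerivAt_id t).smul_const d).const_add x
    have hfline := (hg (x + t • d)).hasFDerivAt.comp_hasDerivAt t hline
    refine ((hfline.sub ((hasDerivAt_id t).mul_const ⟪g x, d⟫_ℝ)).sub
      (((hasDerivAt_pow 2 t).const_mul (L / 2)).mul_const (‖d‖ ^ 2))).congr_deriv ?_
    simp only [InnerProductSpace.toDual_apply_apply, inner_sub_left, one_mul]
    ring
  have hφ'_nonpos : ∀ t, 0 ≤ t → ⟪g (x + t • d) - g x, d⟫_ℝ - L * t * ‖d‖ ^ 2 ≤ 0 := by
    intro t ht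
    calc ⟪g (x + t • d) - g x, d⟫_ℝ - L * t * ‖d‖ ^ 2
        ≤ ‖g (x + t • d) - g x‖ * ‖d‖ - L * t * ‖d‖ ^ 2 := by
          gcongr; exact real_inner_le_norm _ _
      _ ≤ L * ‖t • d‖ * ‖d‖ - L * t * ‖d‖ ^ 2 := by
          gcongr; simpa using hlip (x + t • d) x
      _ = 0 := by rw [norm_smul, Real.norm_of_nonneg ht]; ring
  have hanti : AntitoneOn φ (Ici 0) :=
    antitoneOn_of_hasDerivWithinAt_nonpos (convex_Ici 0)
      (continuous_iff_continuousAt.2 fun t => (hφ t).continuousAt).continuousOn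
      (fun t _ => (hφ t).hasDerivWithinAt) (fun t ht => hφ'_nonpos t (interior_subset ht))
  have h01 := hanti self_mem_Ici (mem_Ici.2 zero_le_one) zero_le_one
  norm_num [φ] at h01
  linarith

theorem sufficient_decrease_of_lipschitz_gradient (hg : ∀ x, HasGradientAt f (g x) x)
    (hlip : ∀ x y, ‖g x - g y‖ ≤ L * ‖x - y‖) {P : E → E} (hP : ∀ v, ‖P v‖ ^ 2 ≤ ⟪v, P v⟫_ℝ)
    (x : E) {η : ℝ} (hη : 0 ≤ η) :
    f (x - η • P (g x)) + η * (1 - L * η / 2) * ‖P (g x)‖ ^ 2 ≤ f x := by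
  have hdescent := image_add_le_of_lipschitz_gradient hg hlip x (-(η • P (g x)))
  rw [← sub_eq_add_neg, inner_neg_right, real_inner_smul_right, norm_neg, norm_smul,
    Real.norm_of_nonneg hη] at hdescent
  nlinarith [mul_le_mul_of_nonneg_left (hP (g x)) hη]

theorem tendsto_zero_of_le_sub_succ {a b : ℕ → ℝ} (ha : BddBelow (range a)) (hb : ∀ k, 0 ≤ b k)
    (hab : ∀ k, b k ≤ a k - a (k + 1)) : Tendsto b atTop (𝓝 0) := by
  have hanti : Antitone a := antitone_nat_of_succ_le fun k => by linarith [hb k, hab k]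
  have hlim := tendsto_atTop_ciInf hanti ha
  have hdiff : Tendsto (fun k => a k - a (k + 1)) atTop (𝓝 0) := by
    simpa using hlim.sub (hlim.comp (tendsto_add_atTop_nat 1))
  exact squeeze_zero hb hab hdiff

theorem tendsto_norm_gradient_of_preconditioned_descent (hg : ∀ x, HasGradientAt f (g x) x)
    (hlip : ∀ x y, ‖g x - g y‖ ≤ L * ‖x - y‖) (hL : 0 ≤ L) (hbdd : BddBelow (range f))
    {P : E → E} (hP : ∀ v, ‖P v‖ ^ 2 ≤ ⟪v, P v⟫_ℝ) {C : ℝ} (hPC : ∀ v, ‖v‖ ≤ C * ‖P v‖)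
    {η : ℕ → ℝ} {ηlo ηhi : ℝ} (hηlo : 0 < ηlo) (hη : ∀ k, ηlo ≤ η k ∧ η k ≤ ηhi)
    (hηhi : L * ηhi < 2) {w : ℕ → E} (hw : ∀ k, w (k + 1) = w k - η k • P (g (w k))) :
    Tendsto (fun k => ‖g (w k)‖) atTop (𝓝 0) := by
  set c := ηlo * (1 - L * ηhi / 2)
  have hc : 0 < c := mul_pos hηlo (by linarith)
  have hdecrease : ∀ k, c * ‖P (g (w k))‖ ^ 2 ≤ f (w k) - f (w (k + 1)) := by
    intro k
    obtain ⟨hlo, hhi⟩ := hη k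
    have hstep := sufficient_decrease_of_lipschitz_gradient hg hlip hP (w k) (hηlo.le.trans hlo)
    rw [← hw] at hstep
    have hc_le : c ≤ η k * (1 - L * η k / 2) :=
      mul_le_mul hlo (by nlinarith) (by linarith) (by linarith)
    nlinarith [mul_le_mul_of_nonneg_right hc_le (sq_nonneg ‖P (g (w k))‖)]
  have hPg : Tendsto (fun k => ‖P (g (w k))‖) atTop (𝓝 0) := by
    have hsq := tendsto_zero_of_le_sub_succ (hbdd.mono (range_comp_subset_range w f))
      (fun k => by positivity) hdecrease
    simpa [hc.ne', Real.sqrt_sq (norm_nonneg _)] using (hsq.const_mul c⁻¹).sqrt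
  exact squeeze_zero (fun k => norm_nonneg _) (fun k => hPC _) (by simpa using hPg.const_mul C)

end PreconditionedDescent

section EuclideanMatrix

variable {ι : Type*} [DecidableEq ι] {A : Matrix ι ι ℝ}

theorem Matrix.posDef_of_posSemidef_sub_one (hA : (A - 1).PosSemidef) : A.PosDef := by
  simpa using PosDef.one.add_posSemidef hA

variable [Fintype ι]

theorem Matrix.toEuclideanLin_apply_toEuclideanLin_inv (hA : IsUnit A) (v : EuclideanSpace ℝ ι) :
    toEuclideanLin A (toEuclideanLin A⁻¹ v) = v := by
  ext i
  simp [mulVec_mulVec, mul_nonsing_inv A ((isUnit_iff_isUnit_det A).1 hA)]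

theorem Matrix.norm_sq_le_inner_toEuclideanLin (hA : (A - 1).PosSemidef)
    (x : EuclideanSpace ℝ ι) : ‖x‖ ^ 2 ≤ ⟪toEuclideanLin A x, x⟫_ℝ := by
  have h := (isPositive_toEuclideanLin_iff.2 hA).2 x
  simp [inner_sub_left] at h
  linarith

theorem Matrix.norm_sq_toEuclideanLin_inv_le_inner (hA : (A - 1).PosSemidef)
    (v : EuclideanSpace ℝ ι) : ‖toEuclideanLin A⁻¹ v‖ ^ 2 ≤ ⟪v, toEuclideanLin A⁻¹ v⟫_ℝ := by
  have hv := toEuclideanLin_apply_toEuclideanLin_inv (posDef_of_posSemidef_sub_one hA).isUnit v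
  simpa [hv, real_inner_comm] using norm_sq_le_inner_toEuclideanLin hA (toEuclideanLin A⁻¹ v)

theorem Matrix.norm_le_mul_norm_toEuclideanLin_inv (hA : IsUnit A) (v : EuclideanSpace ℝ ι) :
    ‖v‖ ≤ ‖toEuclideanCLM (n := ι) (𝕜 := ℝ) A‖ * ‖toEuclideanLin A⁻¹ v‖ := by
  conv_lhs => rw [← toEuclideanLin_apply_toEuclideanLin_inv hA v]
  exact (toEuclideanCLM (n := ι) (𝕜 := ℝ) A).le_opNorm _

end EuclideanMatrix

theorem Lap_eq_neg_transpose_mul_Dplus (m : ℕ) [NeZero m] : Lap m = -((Dplus m)ᵀ * Dplus m) := by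
  simp [Lap, Dminus]

theorem MatAn_eq_one_add_smul_pow (m : ℕ) [NeZero m] (σ : ℝ) (n : ℕ) :
    MatAn m σ n = 1 + σ • ((Dplus m)ᵀ * Dplus m) ^ n := by
  rw [MatAn, Lap_eq_neg_transpose_mul_Dplus]
  rcases Nat.even_or_odd n with h | h
  · rw [h.neg_pow ((Dplus m)ᵀ * Dplus m), h.neg_one_pow, one_mul]
  · rw [h.neg_pow ((Dplus m)ᵀ * Dplus m), h.neg_one_pow, smul_neg, neg_one_mul, neg_smul, neg_neg]

theorem posSemidef_MatAn_sub_one (m : ℕ) [NeZero m] {σ : ℝ} (hσ : 0 ≤ σ) (n : ℕ) :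
    (MatAn m σ n - 1).PosSemidef := by
  rw [MatAn_eq_one_add_smul_pow, add_sub_cancel_left]
  simpa using ((posSemidef_conjTranspose_mul_self (Dplus m)).pow n).smul hσ

theorem stmt7_general (m : ℕ) [NeZero m] (σ : ℝ) (hσ : 0 ≤ σ) (n : ℕ)
    (f : EuclideanSpace ℝ (Fin m) → ℝ)
    (gradf : EuclideanSpace ℝ (Fin m) → EuclideanSpace ℝ (Fin m))
    (hgrad : ∀ x, HasGradientAt f (gradf x) x)
    (L : ℝ) (hL : 0 < L)
    (hlip : ∀ x y, ‖gradf x - gradf y‖ ≤ L * ‖x - y‖)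
    (hbdd : BddBelow (Set.range f))
    (η : ℕ → ℝ) (ηlo ηhi : ℝ) (hηlo : 0 < ηlo)
    (hηk : ∀ k, ηlo ≤ η k ∧ η k ≤ ηhi) (hηhi : ηhi < 2 / L)
    (w : ℕ → EuclideanSpace ℝ (Fin m))
    (hrec : ∀ k, w (k + 1)
        = w k - η k • Matrix.toEuclideanLin ((MatAn m σ n)⁻¹) (gradf (w k))) :
    Filter.Tendsto (fun k => ‖gradf (w k)‖) Filter.atTop (nhds 0) := by
  have hA := posSemidef_MatAn_sub_one m hσ n
  refine tendsto_norm_gradient_of_preconditioned_descent hgrad hlip hL.le hbdd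
    (norm_sq_toEuclideanLin_inv_le_inner hA)
    (norm_le_mul_norm_toEuclideanLin_inv (posDef_of_posSemidef_sub_one hA).isUnit)
    hηlo hηk ?_ hrec
  rwa [lt_div_iff₀ hL, mul_comm] at hηhi

/-- Convergence of LSGD: if `∇f` is `L`-Lipschitz, `f` is bounded below, and the step
sizes satisfy `0 < η̃ ≤ η_k ≤ η̄ < 2/L`, then the iterates
`w^{k+1} = w^k - η_k (A_σ⁽ⁿ⁾)⁻¹ ∇f(w^k)` satisfy `‖∇f(w^k)‖ → 0`. -/
theorem stmt7 (m : ℕ) [NeZero m] (σ : ℝ) (hσ : 0 ≤ σ) (n : ℕ) (hn : 1 ≤ n)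
    (f : EuclideanSpace ℝ (Fin m) → ℝ)
    (gradf : EuclideanSpace ℝ (Fin m) → EuclideanSpace ℝ (Fin m))
    (hgrad : ∀ x, HasGradientAt f (gradf x) x)
    (L : ℝ) (hL : 0 < L)
    (hlip : ∀ x y, ‖gradf x - gradf y‖ ≤ L * ‖x - y‖)
    (hbdd : BddBelow (Set.range f))
    (η : ℕ → ℝ) (ηlo ηhi : ℝ) (hηlo : 0 < ηlo)
    (hηk : ∀ k, ηlo ≤ η k ∧ η k ≤ ηhi) (hηhi : ηhi < 2 / L)
    (w : ℕ → EuclideanSpace ℝ (Fin m))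
    (hrec : ∀ k, w (k + 1)
        = w k - η k • Matrix.toEuclideanLin ((MatAn m σ n)⁻¹) (gradf (w k))) :
    Filter.Tendsto (fun k => ‖gradf (w k)‖) Filter.atTop (nhds 0) :=
  stmt7_general m σ hσ n f gradf hgrad L hL hlip hbdd η ηlo ηhi hηlo hηk hηhi w hrec
end

section
/- Let m ≥ 1, σ ≥ 0, n ≥ 1, g ∈ ℝ^m and d = (A_σ^{(n)})^{-1} g. Then ‖g‖² = ‖d‖² + 2σ‖D₊^n d‖² + σ²‖L^n d‖², where ‖·‖ is the Euclidean norm. -/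
open Matrix

/-! D₊ is circulant, hence normal, so `Lⁿ = (-1)ⁿ BᵀB` and `A_σ⁽ⁿ⁾ = I + σ BᵀB` with `B = D₊ⁿ`;
in particular `A_σ⁽ⁿ⁾` is positive definite, so `g = d + σ BᵀB d`. Expanding `‖g‖²` and using
`⟨d, BᵀB d⟩ = ‖B d‖²` gives the identity. -/

theorem Dplus_eq_circulant (m : ℕ) [NeZero m] :
    Dplus m = circulant fun k => if k = 0 then -1 else if k = -1 then 1 else 0 := by
  ext i j
  simp only [Dplus, of_apply, circulant_apply]
  grind

theorem commute_Dplus_transpose (m : ℕ) [NeZero m] : Commute (Dplus m) (Dplus m)ᵀ := by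
  rw [Dplus_eq_circulant, transpose_circulant]
  exact circulant_mul_comm _ _

theorem Lap_pow (m : ℕ) [NeZero m] (n : ℕ) :
    Lap m ^ n = (-1 : ℝ) ^ n • ((Dplus m ^ n)ᵀ * Dplus m ^ n) := by
  rw [Lap, Dminus, neg_mul, ← neg_one_smul ℝ, smul_pow, (commute_Dplus_transpose m).symm.mul_pow,
    transpose_pow]

theorem MatAn_eq_one_add_smul_transpose_mul (m : ℕ) [NeZero m] (σ : ℝ) (n : ℕ) :
    MatAn m σ n = 1 + σ • ((Dplus m ^ n)ᵀ * Dplus m ^ n) := by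
  rw [MatAn, Lap_pow, smul_smul, mul_right_comm, ← mul_pow, neg_one_mul, neg_neg, one_pow, one_mul]

section Energy

variable {ι κ : Type*} [Fintype ι] [Fintype κ]

theorem sum_sq_eq_dotProduct_self (x : ι → ℝ) : ∑ i, x i ^ 2 = x ⬝ᵥ x := by
  simp only [dotProduct, sq]

theorem posDef_one_add_smul_transpose_mul [DecidableEq ι] {σ : ℝ} (hσ : 0 ≤ σ)
    (B : Matrix κ ι ℝ) : (1 + σ • (Bᵀ * B)).PosDef :=
  PosDef.one.add_posSemidef <| by
    simpa using (posSemidef_conjTranspose_mul_self B).smul hσ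

theorem dotProduct_self_one_add_smul_transpose_mul_mulVec [DecidableEq ι] (σ : ℝ)
    (B : Matrix κ ι ℝ) (d : ι → ℝ) :
    (1 + σ • (Bᵀ * B)) *ᵥ d ⬝ᵥ (1 + σ • (Bᵀ * B)) *ᵥ d
      = d ⬝ᵥ d + 2 * σ * (B *ᵥ d ⬝ᵥ B *ᵥ d) + σ ^ 2 * ((Bᵀ * B) *ᵥ d ⬝ᵥ (Bᵀ * B) *ᵥ d) := by
  have h : d ⬝ᵥ (Bᵀ * B) *ᵥ d = B *ᵥ d ⬝ᵥ B *ᵥ d := by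
    rw [← mulVec_mulVec, dotProduct_mulVec, vecMul_transpose]
  simp only [add_mulVec, one_mulVec, smul_mulVec, add_dotProduct, dotProduct_add, smul_dotProduct,
    dotProduct_smul, smul_eq_mul, dotProduct_comm _ d, h]
  ring

end Energy

theorem stmt10_general (m : ℕ) [NeZero m] (σ : ℝ) (hσ : 0 ≤ σ) (n : ℕ)
    (g d : Fin m → ℝ) (hd : d = (MatAn m σ n)⁻¹ *ᵥ g) :
    ∑ i, g i ^ 2 = ∑ i, d i ^ 2 + 2 * σ * ∑ i, ((Dplus m ^ n) *ᵥ d) i ^ 2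
      + σ ^ 2 * ∑ i, ((Lap m ^ n) *ᵥ d) i ^ 2 := by
  have hA := MatAn_eq_one_add_smul_transpose_mul m σ n
  have hunit : IsUnit (MatAn m σ n).det := by
    rw [← isUnit_iff_isUnit_det, hA]
    exact (posDef_one_add_smul_transpose_mul hσ _).isUnit
  obtain rfl : MatAn m σ n *ᵥ d = g := by
    rw [hd, mulVec_mulVec, mul_nonsing_inv _ hunit, one_mulVec]
  have hLap : Lap m ^ n *ᵥ d ⬝ᵥ Lap m ^ n *ᵥ d
      = ((Dplus m ^ n)ᵀ * Dplus m ^ n) *ᵥ d ⬝ᵥ ((Dplus m ^ n)ᵀ * Dplus m ^ n) *ᵥ d := by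
    rw [Lap_pow, smul_mulVec, smul_dotProduct, dotProduct_smul, smul_smul, ← pow_add, ← two_mul,
      pow_mul, neg_one_sq, one_pow, one_smul]
  simp only [sum_sq_eq_dotProduct_self, hLap]
  rw [hA, dotProduct_self_one_add_smul_transpose_mul_mulVec]

/-- If `d = (A_σ⁽ⁿ⁾)⁻¹ g` then `‖g‖² = ‖d‖² + 2σ‖D₊ⁿ d‖² + σ²‖Lⁿ d‖²` (Euclidean norms,
written as sums of squares of coordinates). -/
theorem stmt10 (m : ℕ) [NeZero m] (σ : ℝ) (hσ : 0 ≤ σ) (n : ℕ) (hn : 1 ≤ n)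
    (g d : Fin m → ℝ) (hd : d = (MatAn m σ n)⁻¹ *ᵥ g) :
    ∑ i, g i ^ 2 = ∑ i, d i ^ 2 + 2 * σ * ∑ i, ((Dplus m ^ n) *ᵥ d) i ^ 2
      + σ ^ 2 * ∑ i, ((Lap m ^ n) *ᵥ d) i ^ 2 :=
  stmt10_general m σ hσ n g d hd
end
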